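/- arXiv:math/9308220 — 7 statements merged into one kernel-verified Lean document; each statement's English description precedes it below -/
import Mathlib

section
/- For all natural numbers r ≤ 4 and n, if 2^r divides n*, then 2^r divides (n + 2^r)*. -/
def nstar (n : ℕ) : ℕ := ∑ i ∈ Finset.range (n + 1), n.factorial / i.factorial

lemma nstar_succ (n : ℕ) : nstar (n + 1) = (n + 1) * nstar n + 1 := by
  unfold nstar
  rw [Finset.sum_range_succ, Nat.div_self (Nat.factorial_pos (n + 1))]
  congr 1
  rw [Finset.mul_sum]
  refine Finset.sum_congr rfl fun i hi => ?_
  have hdvd : i.factorial ∣ n.factorial :=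
    Nat.factorial_dvd_factorial (Nat.lt_succ_iff.mp (Finset.mem_range.mp hi))
  rw [Nat.factorial_succ, Nat.mul_div_assoc _ hdvd]

lemma mod_self_modEq (m : ℕ) : m ≡ 0 [MOD m] := Nat.modEq_zero_iff_dvd.mpr dvd_rfl

lemma nstar_modEq (m n : ℕ) : nstar (n + m) ≡ nstar n [MOD m] := by
  induction n with
  | zero =>
    simp only [Nat.zero_add]
    cases m with
    | zero => rfl
    | succ k =>
      rw [nstar_succ]
      have h0 : nstar 0 = 1 := by simp [nstar]
      rw [h0]
      calc (k + 1) * nstar k + 1 ≡ 0 * nstar k + 1 [MOD k + 1] :=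
            Nat.ModEq.add_right 1 (Nat.ModEq.mul_right _ (mod_self_modEq (k + 1)))
        _ = 1 := by ring
  | succ k ih =>
    have heq : k + 1 + m = (k + m) + 1 := by ring
    rw [heq, nstar_succ, nstar_succ]
    refine Nat.ModEq.add_right 1 (Nat.ModEq.mul ?_ ih)
    calc k + m + 1 = (k + 1) + m := by ring
      _ ≡ (k + 1) + 0 [MOD m] := Nat.ModEq.add_left _ (mod_self_modEq m)
      _ = k + 1 := by ring

theorem pow_two_dvd_nstar_add (r n : ℕ) (hr : r ≤ 4)
    (h : 2 ^ r ∣ nstar n) : 2 ^ r ∣ nstar (n + 2 ^ r) := by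
  exact Nat.modEq_zero_iff_dvd.mp
    ((nstar_modEq (2 ^ r) n).trans (Nat.modEq_zero_iff_dvd.mpr h))
end

section
/- For all natural numbers r ≤ 4, n, and t with 0 < t < 2^r, if 2^r divides n*, then 2^r does not divide (n + t)*. -/
lemma nstar_period (n : ℕ) : nstar (n + 16) % 16 = nstar n % 16 := by
  induction n with
  | zero => decide
  | succ k ih =>
    have h1 : nstar (k + 16) ≡ nstar k [MOD 16] := ih
    have h2 : (k + 16 + 1 : ℕ) ≡ k + 1 [MOD 16] := by
      unfold Nat.ModEq; omega
    have h3 := (h2.mul h1).add_right 1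
    calc nstar (k + 1 + 16) % 16 = ((k + 16 + 1) * nstar (k + 16) + 1) % 16 := by
          rw [show k + 1 + 16 = (k + 16) + 1 by ring, nstar_succ]
      _ = ((k + 1) * nstar k + 1) % 16 := h3
      _ = nstar (k + 1) % 16 := by rw [nstar_succ]

lemma nstar_mod (n : ℕ) : nstar n % 16 = nstar (n % 16) % 16 := by
  induction n using Nat.strong_induction_on with
  | _ n ih =>
    by_cases hn : n < 16
    · rw [Nat.mod_eq_of_lt hn]
    · have h16 : n - 16 + 16 = n := by omega
      have hp := nstar_period (n - 16)
      rw [h16] at hp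
      rw [hp, ih (n - 16) (by omega)]
      congr 2
      omega

lemma key : ∀ r : Fin 5, ∀ m : Fin 16, ∀ t : Fin 16,
    (nstar m % 16) % 2 ^ (r:ℕ) = 0 → (nstar (m + t) % 16) % 2 ^ (r:ℕ) = 0 →
    (t:ℕ) = 0 ∨ 2 ^ (r:ℕ) ≤ (t:ℕ) := by
  decide

theorem pow_two_not_dvd_nstar_add (r n t : ℕ) (hr : r ≤ 4)
    (ht0 : 0 < t) (ht : t < 2 ^ r) (h : 2 ^ r ∣ nstar n) :
    ¬ 2 ^ r ∣ nstar (n + t) := by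
  intro h2
  have hd : (2 : ℕ) ^ r ∣ 16 := by
    have : (2:ℕ)^r ∣ 2^4 := pow_dvd_pow 2 hr
    simpa using this
  have ht16 : t < 16 := lt_of_lt_of_le ht
    (by calc (2:ℕ)^r ≤ 2^4 := Nat.pow_le_pow_right (by norm_num) hr
          _ = 16 := by norm_num)
  have hm : n % 16 < 16 := Nat.mod_lt _ (by norm_num)
  have e1 : (nstar (n % 16) % 16) % 2 ^ r = 0 := by
    rw [← nstar_mod, Nat.mod_mod_of_dvd _ hd]
    exact Nat.mod_eq_zero_of_dvd h
  have e2 : (nstar (n % 16 + t) % 16) % 2 ^ r = 0 := by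
    have : nstar (n % 16 + t) % 16 = nstar (n + t) % 16 := by
      rw [nstar_mod, nstar_mod (n + t)]
      congr 2
      omega
    rw [this, Nat.mod_mod_of_dvd _ hd]
    exact Nat.mod_eq_zero_of_dvd h2
  have h3 := key ⟨r, by omega⟩ ⟨n % 16, hm⟩ ⟨t, ht16⟩ e1 e2
  simp only [Fin.val_mk] at h3
  omega
end

section
/- For natural numbers n ≥ 3 odd and k ≥ 4, if 2^{k+1} divides n*, then (n + 2^k)* ≡ 2^k · (∑_{j=0}^{n-1} ∑_{i=j+1}^{n} n!/(i · j!)) (mod 2^{k+1}), i.e. (n + 2^k)* − n* − 2^k·(∑_{j=0}^{n-1} ∑_{i=j+1}^{n} n!/(i·j!)) is divisible by 2^{k+1}. -/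
open Finset

lemma fac_eq (i n : ℕ) (h : i ≤ n) :
    n.factorial = i.factorial * ∏ t ∈ Icc (i + 1) n, t := by
  induction n, h using Nat.le_induction with
  | base => simp
  | succ n hn ih =>
      rw [Finset.prod_Icc_succ_top (by omega), Nat.factorial_succ, ih]
      ring

lemma div_fac (i n : ℕ) (h : i ≤ n) :
    n.factorial / i.factorial = ∏ t ∈ Icc (i + 1) n, t := by
  rw [fac_eq i n h, Nat.mul_div_cancel_left _ i.factorial_pos]

lemma div_fac2 (i j n : ℕ) (hj : j < i) (hi : i ≤ n) :
    n.factorial / (i * j.factorial) = ∏ t ∈ (Icc (j + 1) n).erase i, t := by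
  have hmem : i ∈ Icc (j + 1) n := by simp; omega
  have h1 := Finset.mul_prod_erase _ (fun t => t) hmem
  rw [fac_eq j n (by omega), ← h1,
    show j.factorial * (i * ∏ t ∈ (Icc (j + 1) n).erase i, t)
      = (i * j.factorial) * ∏ t ∈ (Icc (j + 1) n).erase i, t by ring,
    Nat.mul_div_cancel_left _ (Nat.mul_pos (by omega) j.factorial_pos)]

lemma prod_add_eps {R : Type*} [CommRing R] (m : R) (hm : m * m = 0)
    (s : Finset ℕ) (f : ℕ → R) :
    ∏ j ∈ s, (f j + m) = ∏ j ∈ s, f j + m * ∑ j ∈ s, ∏ l ∈ s.erase j, f l := by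
  induction s using Finset.cons_induction with
  | empty => simp
  | cons a s ha ih =>
      have h2 : ∑ j ∈ s, ∏ l ∈ (Finset.cons a s ha).erase j, f l
          = ∑ j ∈ s, f a * ∏ l ∈ s.erase j, f l :=
        Finset.sum_congr rfl (fun j hj => by
          rw [Finset.erase_cons_of_ne ha (by rintro rfl; exact ha hj), Finset.prod_cons])
      rw [Finset.prod_cons, ih, Finset.prod_cons, Finset.sum_cons, Finset.erase_cons, h2]
      rw [← Finset.mul_sum]
      linear_combination (∑ j ∈ s, ∏ l ∈ s.erase j, f l) * hm

lemma prod_shift (a b m : ℕ) :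
    ∏ t ∈ Icc (a + m) (b + m), t = ∏ j ∈ Icc a b, (j + m) := by
  rw [← Finset.map_add_right_Icc, Finset.prod_map]
  rfl

theorem nstar_add_pow_two_congr (n k : ℕ) (hn : 3 ≤ n) (hodd : Odd n)
    (hk : 4 ≤ k) (h : 2 ^ (k + 1) ∣ nstar n) :
    (2 ^ (k + 1) : ℤ) ∣
      ((nstar (n + 2 ^ k) : ℤ) - (nstar n : ℤ) -
        (2 ^ k : ℤ) *
          (∑ j ∈ Finset.range n, ∑ i ∈ Finset.Icc (j + 1) n,
            (n.factorial / (i * j.factorial) : ℕ) : ℤ)) := by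
  set m := 2 ^ k with hmdef
  set M := 2 ^ (k + 1) with hMdef
  have hm1 : 1 ≤ m := Nat.one_le_two_pow
  set S : ℕ := ∑ j ∈ Finset.range n, ∑ i ∈ Finset.Icc (j + 1) n,
      n.factorial / (i * j.factorial) with hSdef
  have hcollect : (∑ j ∈ Finset.range n, ∑ i ∈ Finset.Icc (j + 1) n,
      ((n.factorial / (i * j.factorial) : ℕ) : ℤ)) = ((S : ℕ) : ℤ) := by
    rw [hSdef]; push_cast; rfl
  rw [hcollect]
  have hMcast : (2 ^ (k + 1) : ℤ) = ((M : ℕ) : ℤ) := by push_cast [hMdef]; ring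
  rw [hMcast, ← ZMod.intCast_zmod_eq_zero_iff_dvd]
  push_cast
  have hmm : ((m : ZMod M) * m) = 0 := by
    have h0 : ((m * m : ℕ) : ZMod M) = 0 := by
      rw [ZMod.natCast_eq_zero_iff, hMdef, hmdef, ← pow_add]
      exact pow_dvd_pow 2 (by omega)
    push_cast at h0; exact h0
  have hS' : (∑ j ∈ Finset.range (n + 1), ∑ i ∈ Finset.Icc (j + 1) n,
      n.factorial / (i * j.factorial)) = S := by
    rw [Finset.sum_range_succ, Finset.Icc_eq_empty (by omega), Finset.sum_empty, add_zero,
      hSdef]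
  have key : ((nstar (n + m) : ℕ) : ZMod M)
      = ((nstar n : ℕ) : ZMod M) + (m : ZMod M) *
        ((∑ j ∈ Finset.range (n + 1), ∑ i ∈ Finset.Icc (j + 1) n,
          n.factorial / (i * j.factorial) : ℕ) : ZMod M) := by
    have hsplit : nstar (n + m) =
        (∑ i ∈ range m, (n + m).factorial / i.factorial)
        + ∑ i ∈ range (n + 1), (n + m).factorial / (i + m).factorial := by
      rw [nstar, show n + m + 1 = m + (n + 1) by omega, Finset.range_add,
        Finset.sum_union (by
          simp [Finset.disjoint_left]
          intro a ha; simp [Finset.mem_map] at *; omega)]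
      congr 1
      rw [Finset.sum_map]
      apply Finset.sum_congr rfl
      intro i hi
      simp only [addLeftEmbedding_apply]
      rw [Nat.add_comm m i]
    rw [hsplit]
    push_cast
    have hz : ∑ i ∈ range m, (((n + m).factorial / i.factorial : ℕ) : ZMod M) = 0 := by
      apply Finset.sum_eq_zero
      intro i hi
      simp only [Finset.mem_range] at hi
      rw [ZMod.natCast_eq_zero_iff]
      rw [div_fac i (n + m) (by omega)]
      have h1 : m ∈ Icc (i + 1) (n + m) := by simp; omega
      have h2 : m + 2 ∈ (Icc (i + 1) (n + m)).erase m := by simp; omega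
      rw [← Finset.mul_prod_erase _ _ h1, ← Finset.mul_prod_erase _ _ h2, ← mul_assoc]
      refine Dvd.dvd.mul_right ?_ _
      obtain ⟨c, hc⟩ : 2 ∣ m + 2 := by
        refine Dvd.dvd.add ?_ dvd_rfl
        exact dvd_pow_self 2 (by omega)
      rw [hc, hMdef, hmdef, pow_succ]
      exact ⟨c, by ring⟩
    rw [hz, zero_add]
    have hterm : ∀ i ∈ range (n + 1),
        (((n + m).factorial / (i + m).factorial : ℕ) : ZMod M)
        = ∏ j ∈ Icc (i + 1) n, ((j : ZMod M) + m) := by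
      intro i hi
      simp only [Finset.mem_range] at hi
      rw [div_fac (i + m) (n + m) (by omega),
        show i + m + 1 = (i + 1) + m by omega, prod_shift]
      push_cast
      rfl
    rw [Finset.sum_congr rfl hterm]
    rw [Finset.sum_congr rfl (fun i _ => prod_add_eps (m : ZMod M) hmm _ _)]
    rw [Finset.sum_add_distrib, ← Finset.mul_sum]
    congr 1
    · rw [nstar]
      push_cast
      apply Finset.sum_congr rfl
      intro i hi
      simp only [Finset.mem_range] at hi
      rw [div_fac i n (by omega)]
      push_cast
      rfl
    · congr 1
      push_cast
      apply Finset.sum_congr rfl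
      intro j hj
      simp only [Finset.mem_range] at hj
      apply Finset.sum_congr rfl
      intro i hi
      simp only [Finset.mem_Icc] at hi
      rw [div_fac2 i j n (by omega) (by omega)]
      push_cast
      rfl
  rw [hS'] at key
  rw [key]
  push_cast [hmdef]
  ring
end

section
/- For odd n ≥ 3, the double sum ∑_{j=0}^{n-1} ∑_{i=j+1}^{n} n!/(i · j!) is odd. -/
open Finset

lemma prod_Ioc_fact (n : ℕ) : (∏ k ∈ Ioc 0 n, k) = n.factorial := by
  rw [← Finset.Icc_add_one_left_eq_Ioc, ← Finset.Ico_add_one_right_eq_Icc]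
  exact prod_Ico_id_eq_factorial n

lemma term_eq (n i j : ℕ) (h1 : j < i) (h2 : i ≤ n) :
    n.factorial / (i * j.factorial) = ∏ k ∈ (Ioc j n).erase i, k := by
  have hmem : i ∈ Ioc j n := by simp only [mem_Ioc]; omega
  have hfac : (∏ k ∈ Ioc j n, k) * j.factorial = n.factorial := by
    rw [← prod_Ioc_fact n, ← prod_Ioc_fact j, mul_comm]
    exact prod_Ioc_consecutive _ (Nat.zero_le j) (le_of_lt (lt_of_lt_of_le h1 h2))
  have h3 : n.factorial = (∏ k ∈ (Ioc j n).erase i, k) * (i * j.factorial) := by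
    rw [← hfac, ← Finset.mul_prod_erase _ _ hmem]; ring
  rw [h3, Nat.mul_div_cancel]
  have : 0 < i := by omega
  positivity

lemma inner_even (n j : ℕ) (h : j + 4 ≤ n) :
    Even (∑ i ∈ Icc (j + 1) n, n.factorial / (i * j.factorial)) := by
  rw [even_iff_two_dvd]
  apply Finset.dvd_sum
  intro i hi
  simp only [mem_Icc] at hi
  rw [term_eq n i j (by omega) hi.2]
  set e1 := 2 * (j / 2 + 1) with he1
  set m := if e1 = i then e1 + 2 else e1 with hm
  have hme : 2 ∣ m := by rw [hm]; split <;> omega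
  have hmm : m ∈ (Ioc j n).erase i := by
    rw [mem_erase, mem_Ioc]
    rw [hm]; split <;> omega
  exact hme.trans (Finset.dvd_prod_of_mem id hmm)

theorem double_sum_odd (n : ℕ) (hn : 3 ≤ n) (hodd : Odd n) :
    Odd (∑ j ∈ Finset.range n, ∑ i ∈ Finset.Icc (j + 1) n,
      n.factorial / (i * j.factorial)) := by
  obtain ⟨m, rfl⟩ : ∃ m, n = m + 3 := ⟨n - 3, by omega⟩
  have hm2 : m % 2 = 0 := by rcases hodd with ⟨k, hk⟩; omega
  rw [Finset.sum_range_succ, Finset.sum_range_succ, Finset.sum_range_succ]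
  have hE : Even (∑ j ∈ Finset.range m, ∑ i ∈ Finset.Icc (j + 1) (m + 3),
      (m + 3).factorial / (i * j.factorial)) := by
    rw [even_iff_two_dvd]
    apply Finset.dvd_sum
    intro j hj
    simp only [mem_range] at hj
    rw [← even_iff_two_dvd]
    exact inner_even (m + 3) j (by omega)
  have hIcc3 : Icc (m + 1) (m + 3) = {m + 1, m + 2, m + 3} := by
    ext x; simp only [mem_Icc, mem_insert, mem_singleton]; omega
  have hIcc2 : Icc (m + 2) (m + 3) = {m + 2, m + 3} := by
    ext x; simp only [mem_Icc, mem_insert, mem_singleton]; omega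
  have hIcc1 : Icc (m + 3) (m + 3) = {m + 3} := Finset.Icc_self _
  have key : ∀ i j : ℕ, j < i → i ≤ m + 3 →
      (m + 3).factorial / (i * j.factorial) = ∏ k ∈ (Ioc j (m + 3)).erase i, k :=
    fun i j h1 h2 => term_eq (m + 3) i j h1 h2
  have e1 : (Ioc m (m + 3)).erase (m + 1) = {m + 2, m + 3} := by
    ext x; simp only [mem_Ioc, mem_erase, mem_insert, mem_singleton]; omega
  have e2 : (Ioc m (m + 3)).erase (m + 2) = {m + 1, m + 3} := by
    ext x; simp only [mem_Ioc, mem_erase, mem_insert, mem_singleton]; omega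
  have e3 : (Ioc m (m + 3)).erase (m + 3) = {m + 1, m + 2} := by
    ext x; simp only [mem_Ioc, mem_erase, mem_insert, mem_singleton]; omega
  have f2 : (Ioc (m + 1) (m + 3)).erase (m + 2) = {m + 3} := by
    ext x; simp only [mem_Ioc, mem_erase, mem_singleton]; omega
  have f3 : (Ioc (m + 1) (m + 3)).erase (m + 3) = {m + 2} := by
    ext x; simp only [mem_Ioc, mem_erase, mem_singleton]; omega
  have g3 : (Ioc (m + 2) (m + 3)).erase (m + 3) = (∅ : Finset ℕ) := by
    ext x; simp only [mem_Ioc, mem_erase, Finset.notMem_empty, iff_false, not_and]; omega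
  have T1 : ∑ i ∈ Finset.Icc (m + 1) (m + 3), (m + 3).factorial / (i * m.factorial)
      = (m + 2) * (m + 3) + (m + 1) * (m + 3) + (m + 1) * (m + 2) := by
    rw [hIcc3]
    rw [Finset.sum_insert (by simp only [mem_insert, mem_singleton]; omega),
      Finset.sum_insert (by simp only [mem_singleton]; omega),
      Finset.sum_singleton]
    rw [key (m+1) m (by omega) (by omega), key (m+2) m (by omega) (by omega),
      key (m+3) m (by omega) (by omega), e1, e2, e3]
    rw [Finset.prod_insert (by simp only [mem_singleton]; omega), Finset.prod_singleton,
      Finset.prod_insert (by simp only [mem_singleton]; omega), Finset.prod_singleton,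
      Finset.prod_insert (by simp only [mem_singleton]; omega), Finset.prod_singleton]
    ring
  have T2 : ∑ i ∈ Finset.Icc (m + 2) (m + 3), (m + 3).factorial / (i * (m+1).factorial)
      = (m + 3) + (m + 2) := by
    rw [hIcc2, Finset.sum_insert (by simp only [mem_singleton]; omega), Finset.sum_singleton]
    rw [key (m+2) (m+1) (by omega) (by omega), key (m+3) (m+1) (by omega) (by omega),
      f2, f3, Finset.prod_singleton, Finset.prod_singleton]
  have T3 : ∑ i ∈ Finset.Icc (m + 3) (m + 3), (m + 3).factorial / (i * (m+2).factorial)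
      = 1 := by
    rw [hIcc1, Finset.sum_singleton, key (m+3) (m+2) (by omega) (by omega), g3,
      Finset.prod_empty]
  rw [T1, T2, T3]
  have p1 : ((m + 2) * (m + 3)) % 2 = 0 :=
    Nat.even_iff.1 (Even.mul_right (Nat.even_iff.2 (by omega)) _)
  have p2 : ((m + 1) * (m + 3)) % 2 = 1 :=
    Nat.odd_iff.1 ((Nat.odd_iff.2 (by omega)).mul (Nat.odd_iff.2 (by omega)))
  have p3 : ((m + 1) * (m + 2)) % 2 = 0 :=
    Nat.even_iff.1 (Even.mul_left (Nat.even_iff.2 (by omega)) _)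
  rw [Nat.even_iff] at hE
  rw [Nat.odd_iff]
  omega
end

section
/- For all natural numbers n ≥ 3 and k ≥ 4, if 2^{k+1} divides n*, then 2^{k+1} does not divide (n + 2^k)*. -/
lemma nstar_mod_two (n : ℕ) : nstar n % 2 = (n + 1) % 2 := by
  induction n with
  | zero => rfl
  | succ n ih =>
    rw [nstar_succ, Nat.add_mod, Nat.mul_mod, ih]
    rcases Nat.mod_two_eq_zero_or_one (n + 1) with h | h <;> rw [h] <;> omega

lemma fac_decomp (m : ℕ) (hm : 4 ≤ m) :
    m.factorial = m * (m - 1) * (m - 2) * (m - 3).factorial := by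
  obtain ⟨a, rfl⟩ : ∃ a, m = a + 4 := ⟨m - 4, by omega⟩
  rw [show a + 4 = (a + 3) + 1 by omega, Nat.factorial_succ,
    show a + 3 = (a + 2) + 1 by omega, Nat.factorial_succ,
    show a + 2 = (a + 1) + 1 by omega, Nat.factorial_succ]
  simp only [show a + 3 + 1 - 1 = a + 3 by omega, show a + 3 + 1 - 2 = a + 2 by omega,
    show a + 3 + 1 - 3 = a + 1 by omega]
  ring

lemma nstar_pow (k : ℕ) (hk : 2 ≤ k) :
    (nstar (2 ^ k) : ZMod (2 ^ (k + 1))) = 1 := by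
  haveI : NeZero (2 ^ (k + 1)) := ⟨by positivity⟩
  set m := 2 ^ k with hmdef
  have hm : 4 ≤ m := by
    calc 4 = 2 ^ 2 := by norm_num
    _ ≤ 2 ^ k := Nat.pow_le_pow_right (by norm_num) hk
  have hdecomp : nstar m = (∑ i ∈ Finset.range (m - 2), m.factorial / i.factorial)
      + m.factorial / (m - 2).factorial + m.factorial / (m - 1).factorial + 1 := by
    unfold nstar
    rw [show m + 1 = (m - 2) + 1 + 1 + 1 by omega, Finset.sum_range_succ,
      Finset.sum_range_succ, Finset.sum_range_succ,
      show m - 2 + 1 + 1 = m by omega, show m - 2 + 1 = m - 1 by omega,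
      Nat.div_self m.factorial_pos]
  have hdvd : (2 ^ (k + 1) : ℕ) ∣ ∑ i ∈ Finset.range (m - 2), m.factorial / i.factorial := by
    apply Finset.dvd_sum
    intro i hi
    rw [Finset.mem_range] at hi
    have h3 : i ≤ m - 3 := by omega
    have heq : m.factorial / i.factorial
        = m * (m - 1) * (m - 2) * ((m - 3).factorial / i.factorial) := by
      rw [fac_decomp m hm, Nat.mul_div_assoc _ (Nat.factorial_dvd_factorial h3)]
    rw [heq]
    have : (2 ^ (k + 1) : ℕ) ∣ m * (m - 1) * (m - 2) := by
      have h1 : m - 2 = 2 * (2 ^ (k - 1) - 1) := by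
        have : m = 2 * 2 ^ (k - 1) := by
          rw [hmdef, ← pow_succ']
          congr 1
          omega
        omega
      exact ⟨(m - 1) * (2 ^ (k - 1) - 1), by rw [h1, pow_succ, hmdef]; ring⟩
    exact this.mul_right _
  have h2 : m.factorial / (m - 2).factorial = m * (m - 1) := by
    rw [fac_decomp m hm, show m - 2 = (m - 3) + 1 by omega, Nat.factorial_succ]
    rw [show m * (m - 1) * (m - 3 + 1) * (m - 3).factorial
      = m * (m - 1) * ((m - 3 + 1) * (m - 3).factorial) by ring]
    exact Nat.mul_div_cancel _ (by positivity)
  have h1 : m.factorial / (m - 1).factorial = m := by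
    rw [show m = (m - 1) + 1 by omega, Nat.factorial_succ,
      show m - 1 + 1 - 1 = m - 1 by omega]
    exact Nat.mul_div_cancel _ (by positivity)
  have hA : ((∑ i ∈ Finset.range (m - 2), m.factorial / i.factorial : ℕ)
      : ZMod (2 ^ (k + 1))) = 0 := (ZMod.natCast_eq_zero_iff _ _).mpr hdvd
  have hMM : ((m * m : ℕ) : ZMod (2 ^ (k + 1))) = 0 := by
    rw [ZMod.natCast_eq_zero_iff, hmdef, ← pow_add]
    exact pow_dvd_pow 2 (by omega)
  have hmm : m * (m - 1) + m = m * m := by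
    have h' : m - 1 + 1 = m := by omega
    calc m * (m - 1) + m = m * ((m - 1) + 1) := by ring
      _ = m * m := by rw [h']
  have hre : (∑ i ∈ Finset.range (m - 2), m.factorial / i.factorial)
      + m * (m - 1) + m + 1
      = (∑ i ∈ Finset.range (m - 2), m.factorial / i.factorial) + m * m + 1 := by
    omega
  rw [hdecomp, h2, h1, hre, Nat.cast_add, Nat.cast_add, hA, hMM]
  norm_num

lemma pow_mul_parity (k a b : ℕ) (h : a % 2 = b % 2) :
    ((2 ^ k * a : ℕ) : ZMod (2 ^ (k + 1))) = ((2 ^ k * b : ℕ) : ZMod (2 ^ (k + 1))) := by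
  haveI : NeZero (2 ^ (k + 1)) := ⟨by positivity⟩
  obtain ⟨c, hc⟩ | ⟨c, hc⟩ : (∃ c, a = b + 2 * c) ∨ (∃ c, b = a + 2 * c) := by
    rcases le_total a b with h' | h'
    · right; exact ⟨(b - a) / 2, by omega⟩
    · left; exact ⟨(a - b) / 2, by omega⟩
  · subst hc
    have h0 : ((2 ^ (k + 1) : ℕ) : ZMod (2 ^ (k + 1))) = 0 := ZMod.natCast_self _
    push_cast at h0 ⊢
    linear_combination (c : ZMod (2 ^ (k + 1))) * h0
  · subst hc
    have h0 : ((2 ^ (k + 1) : ℕ) : ZMod (2 ^ (k + 1))) = 0 := ZMod.natCast_self _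
    push_cast at h0 ⊢
    linear_combination (-(c : ZMod (2 ^ (k + 1)))) * h0

lemma key_s8 (k : ℕ) (hk : 2 ≤ k) (n : ℕ) :
    (nstar (n + 2 ^ k) : ZMod (2 ^ (k + 1)))
      = (nstar n : ZMod (2 ^ (k + 1))) + ((2 ^ k * (n % 2) : ℕ) : ZMod (2 ^ (k + 1))) := by
  haveI : NeZero (2 ^ (k + 1)) := ⟨by positivity⟩
  induction n with
  | zero =>
    simp only [Nat.zero_add, Nat.zero_mod, Nat.mul_zero, Nat.cast_zero, add_zero]
    rw [nstar_pow k hk]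
    norm_num [nstar]
  | succ n ih =>
    rw [show n + 1 + 2 ^ k = (n + 2 ^ k) + 1 by omega, nstar_succ, nstar_succ]
    have hpar : ((2 ^ k * (nstar n + (n + 1) * (n % 2)) : ℕ) : ZMod (2 ^ (k + 1)))
        = ((2 ^ k * ((n + 1) % 2) : ℕ) : ZMod (2 ^ (k + 1))) := by
      apply pow_mul_parity
      have := nstar_mod_two n
      rcases Nat.mod_two_eq_zero_or_one n with h | h <;> rw [h] <;> omega
    have hsq : ((2 : ZMod (2 ^ (k + 1))) ^ k) * (2 ^ k) = 0 := by
      have : ((2 ^ k * 2 ^ k : ℕ) : ZMod (2 ^ (k + 1))) = 0 := by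
        rw [ZMod.natCast_eq_zero_iff, ← pow_add]
        exact pow_dvd_pow 2 (by omega)
      push_cast at this
      exact this
    push_cast at ih hpar ⊢
    rw [ih]
    linear_combination hpar + ((n % 2 : ℕ) : ZMod (2 ^ (k + 1))) * hsq

theorem pow_succ_not_dvd_nstar_add (n k : ℕ) (hn : 3 ≤ n) (hk : 4 ≤ k)
    (h : 2 ^ (k + 1) ∣ nstar n) : ¬ 2 ^ (k + 1) ∣ nstar (n + 2 ^ k) := by
  haveI : NeZero (2 ^ (k + 1)) := ⟨by positivity⟩
  intro hdvd
  have hodd : n % 2 = 1 := by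
    by_contra hc
    have h0 : n % 2 = 0 := by omega
    have h2 : (2 : ℕ) ∣ nstar n := dvd_trans (dvd_pow_self 2 (Nat.succ_ne_zero k)) h
    have := nstar_mod_two n
    omega
  have hz : (nstar n : ZMod (2 ^ (k + 1))) = 0 := by
    rwa [ZMod.natCast_eq_zero_iff]
  have hz2 : (nstar (n + 2 ^ k) : ZMod (2 ^ (k + 1))) = 0 := by
    rwa [ZMod.natCast_eq_zero_iff]
  have hkey := key_s8 k (by omega) n
  rw [hz, hz2, hodd, zero_add, mul_one] at hkey
  have : (2 ^ (k + 1) : ℕ) ∣ 2 ^ k := by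
    rwa [← ZMod.natCast_eq_zero_iff, eq_comm]
  have hle := Nat.le_of_dvd (by positivity) this
  have hlt : (2 : ℕ) ^ k < 2 ^ (k + 1) := Nat.pow_lt_pow_right (by norm_num) (Nat.lt_succ_self k)
  omega
end

section
/- If k ≥ 4 is the smallest natural number for which there exist n and t with 0 < t < 2^{k+1} such that 2^{k+1} divides both n* and (n+t)*, then t = 2^k. -/
lemma nstar_eq_sum_descFactorial (n : ℕ) :
    nstar n = ∑ L ∈ Finset.range (n + 1), n.descFactorial L := by
  rw [nstar, ← Finset.sum_range_reflect]
  apply Finset.sum_congr rfl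
  intro i hi
  rw [Finset.mem_range] at hi
  rw [Nat.descFactorial_eq_div (show i ≤ n by omega)]
  congr 2

lemma descFactorial_add_modEq (M x L : ℕ) :
    Nat.descFactorial (x + M) L ≡ Nat.descFactorial x L [MOD M] := by
  induction L with
  | zero => rfl
  | succ L ih =>
    rw [Nat.descFactorial_succ, Nat.descFactorial_succ]
    by_cases h : L ≤ x
    · rw [show x + M - L = (x - L) + M by omega]
      exact (Nat.add_modEq_right).mul ih
    · push_neg at h
      have hx : Nat.descFactorial x L = 0 := Nat.descFactorial_eq_zero_iff_lt.2 h
      have hd : M ∣ Nat.descFactorial (x + M) L := by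
        have := ih; rw [hx] at this
        exact (Nat.modEq_zero_iff_dvd).1 this
      rw [hx, Nat.mul_zero]
      exact (Nat.modEq_zero_iff_dvd).2 (Dvd.dvd.mul_left hd _)

lemma nstar_add_modEq (M x : ℕ) : nstar (x + M) ≡ nstar x [MOD M] := by
  rw [nstar_eq_sum_descFactorial, nstar_eq_sum_descFactorial]
  have hsplit : Finset.range (x + M + 1) = Finset.range (x + 1) ∪
      Finset.Ico (x + 1) (x + M + 1) := by
    rw [Finset.range_eq_Ico, Finset.range_eq_Ico]
    exact (Finset.Ico_union_Ico_eq_Ico (a := 0) (b := x + 1) (c := x + M + 1) (by omega) (by omega)).symm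
  rw [hsplit, Finset.sum_union (by
    simp only [Finset.disjoint_left, Finset.mem_range, Finset.mem_Ico]
    omega)]
  have htail : M ∣ ∑ L ∈ Finset.Ico (x + 1) (x + M + 1), Nat.descFactorial (x + M) L := by
    apply Finset.dvd_sum
    intro L hL
    rw [Finset.mem_Ico] at hL
    have hx : Nat.descFactorial x L = 0 := Nat.descFactorial_eq_zero_iff_lt.2 (by omega)
    have := descFactorial_add_modEq M x L
    rw [hx] at this
    exact (Nat.modEq_zero_iff_dvd).1 this
  have hmain : (∑ L ∈ Finset.range (x+1), Nat.descFactorial (x+M) L)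
      ≡ ∑ L ∈ Finset.range (x+1), Nat.descFactorial x L [MOD M] := by
    unfold Nat.ModEq
    rw [Finset.sum_nat_mod, Finset.sum_nat_mod (Finset.range (x+1)) M
      (fun L => Nat.descFactorial x L)]
    congr 1
    exact Finset.sum_congr rfl (fun L _ => descFactorial_add_modEq M x L)
  calc (∑ L ∈ Finset.range (x+1), Nat.descFactorial (x+M) L)
        + ∑ L ∈ Finset.Ico (x+1) (x+M+1), Nat.descFactorial (x+M) L
      ≡ (∑ L ∈ Finset.range (x+1), Nat.descFactorial (x+M) L) + 0 [MOD M] :=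
        Nat.ModEq.add_left _ ((Nat.modEq_zero_iff_dvd).2 htail)
    _ = ∑ L ∈ Finset.range (x+1), Nat.descFactorial (x+M) L := by ring
    _ ≡ ∑ L ∈ Finset.range (x+1), Nat.descFactorial x L [MOD M] := hmain

lemma nstar_add_mul_modEq (M x q : ℕ) : nstar (x + M * q) ≡ nstar x [MOD M] := by
  induction q with
  | zero => rw [Nat.mul_zero, Nat.add_zero]
  | succ q ih =>
    rw [show x + M * (q + 1) = (x + M * q) + M by ring]
    exact (nstar_add_modEq M (x + M * q)).trans ih

lemma nstar_modEq_mod (M x : ℕ) : nstar x ≡ nstar (x % M) [MOD M] := by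
  conv_lhs => rw [← Nat.mod_add_div x M]
  exact nstar_add_mul_modEq M (x % M) (x / M)

lemma nstar_mod32 : ∀ r : Fin 32, 32 ∣ nstar r.val → r.val = 19 := by decide

theorem minimal_k_t_eq_pow (k n t : ℕ) (hk : 4 ≤ k)
    (hmin : ∀ k', 4 ≤ k' → k' < k →
      ¬ ∃ n' t', 0 < t' ∧ t' < 2 ^ (k' + 1) ∧
        2 ^ (k' + 1) ∣ nstar n' ∧ 2 ^ (k' + 1) ∣ nstar (n' + t'))
    (ht0 : 0 < t) (ht : t < 2 ^ (k + 1))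
    (h1 : 2 ^ (k + 1) ∣ nstar n) (h2 : 2 ^ (k + 1) ∣ nstar (n + t)) :
    t = 2 ^ k := by
  rcases Nat.lt_or_ge 4 k with hk4 | hk4
  · -- k > 4
    have hdvd : (2 : ℕ) ^ k ∣ 2 ^ (k + 1) := pow_dvd_pow 2 (Nat.le_succ k)
    have h1' : 2 ^ k ∣ nstar n := hdvd.trans h1
    have h2' : 2 ^ k ∣ nstar (n + t) := hdvd.trans h2
    have hkk : k - 1 + 1 = k := by omega
    rcases Nat.lt_or_ge t (2 ^ k) with hlt | hge
    · exact absurd ⟨n, t, ht0, by rw [hkk]; exact hlt, by rw [hkk]; exact h1',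
        by rw [hkk]; exact h2'⟩ (hmin (k - 1) (by omega) (by omega))
    · set s := t - 2 ^ k with hs
      have hslt : s < 2 ^ k := by
        have : (2:ℕ) ^ (k+1) = 2 * 2 ^ k := by rw [pow_succ]; ring
        omega
      rcases Nat.eq_zero_or_pos s with h0 | hpos
      · omega
      · exfalso
        have heq : n + t = (n + s) + 2 ^ k := by omega
        have hmod : 2 ^ k ∣ nstar (n + s) := by
          have hc := nstar_add_modEq (2 ^ k) (n + s)
          rw [← heq] at hc
          exact (Nat.modEq_zero_iff_dvd).1
            (hc.symm.trans ((Nat.modEq_zero_iff_dvd).2 h2'))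
        exact hmin (k - 1) (by omega) (by omega)
          ⟨n, s, hpos, by rw [hkk]; exact hslt, by rw [hkk]; exact h1',
            by rw [hkk]; exact hmod⟩
  · -- k = 4
    have hk4' : k = 4 := le_antisymm hk4 hk
    subst hk4'
    norm_num at ht h1 h2 ⊢
    exfalso
    have e1 : n % 32 = 19 := by
      have hc := nstar_modEq_mod 32 n
      exact nstar_mod32 ⟨n % 32, Nat.mod_lt _ (by norm_num)⟩
        ((Nat.modEq_zero_iff_dvd).1 (hc.symm.trans ((Nat.modEq_zero_iff_dvd).2 h1)))
    have e2 : (n + t) % 32 = 19 := by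
      have hc := nstar_modEq_mod 32 (n + t)
      exact nstar_mod32 ⟨(n + t) % 32, Nat.mod_lt _ (by norm_num)⟩
        ((Nat.modEq_zero_iff_dvd).1 (hc.symm.trans ((Nat.modEq_zero_iff_dvd).2 h2)))
    omega
end

section
/- For every set S with at least 2 elements, the cardinality of the set of finite injective sequences of S is not equal to the cardinality of the power set of S. -/
open Cardinal

theorem nodup_lists_ne_powerset (S : Type*) (h : 2 ≤ Cardinal.mk S) :
    Cardinal.mk {l : List S // l.Nodup} ≠ Cardinal.mk (Set S) := by
  cases finite_or_infinite S with
  | inr hinf =>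
    have h1 : #{l : List S // l.Nodup} ≤ #S :=
      calc #{l : List S // l.Nodup} ≤ #(List S) := mk_subtype_le _
        _ = #S := mk_list_eq_mk S
    have h2 : #S < #(Set S) := by rw [mk_set]; exact cantor _
    exact ne_of_lt (h1.trans_lt h2)
  | inl hfin =>
    letI := Fintype.ofFinite S
    letI : LinearOrder S := IsWellOrder.linearOrder (@WellOrderingRel S)
    classical
    obtain ⟨a, b, hab⟩ := Cardinal.two_le_iff.mp h
    -- wlog a < b
    obtain ⟨a, b, hlt⟩ : ∃ a b : S, a < b := by
      rcases lt_or_gt_of_ne hab with h' | h'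
      · exact ⟨a, b, h'⟩
      · exact ⟨b, a, h'⟩
    set f : Option (Set S) → {l : List S // l.Nodup} := fun o =>
      match o with
      | none => ⟨[b, a], by simp [List.nodup_cons, hlt.ne']⟩
      | some s => ⟨Finset.sort s.toFinset (· ≤ ·), Finset.sort_nodup _ _⟩ with hf
    have finj : Function.Injective f := by
      intro x y hxy
      match x, y with
      | none, none => rfl
      | some s, some t =>
        have := congrArg (fun l : {l : List S // l.Nodup} => (l : List S).toFinset) hxy
        simp only [hf, Finset.sort_toFinset] at this
        exact congrArg some (Set.toFinset_inj.mp this)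
      | none, some s =>
        exfalso
        have hs : ([b, a] : List S).Pairwise (· ≤ ·) := by
          have := congrArg (fun l : {l : List S // l.Nodup} => (l : List S)) hxy
          simp only [hf] at this
          rw [this]
          exact Finset.pairwise_sort _ _
        have : b ≤ a := by
          simp [List.pairwise_cons] at hs
          exact hs
        exact absurd this (not_le_of_gt hlt)
      | some s, none =>
        exfalso
        have hs : ([b, a] : List S).Pairwise (· ≤ ·) := by
          have := congrArg (fun l : {l : List S // l.Nodup} => (l : List S)) hxy
          simp only [hf] at this
          rw [← this]
          exact Finset.pairwise_sort _ _
        have : b ≤ a := by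
          simp [List.pairwise_cons] at hs
          exact hs
        exact absurd this (not_le_of_gt hlt)
    have hle : #(Option (Set S)) ≤ #{l : List S // l.Nodup} := mk_le_of_injective finj
    have hlt2 : #(Set S) < #(Option (Set S)) := by
      rw [mk_option]
      obtain ⟨n, hn⟩ := Cardinal.lt_aleph0.mp (Cardinal.lt_aleph0_of_finite (Set S))
      rw [hn]
      norm_cast
      omega
    exact (hlt2.trans_le hle).ne'
end
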